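/- In the Hecke–Kiselman monoid H_{Q'} of the digraph Q' with vertices a,b,c,d, edges a—b and c—d, arrows a→c, a→d, b→c, and b,d unconnected, the element x^3 = abacdc (where x = adbc) is a right zero for the generators: x^3·a = x^3·b = x^3·c = x^3·d = x^3. -/

import Mathlib

/-!
The last three letters of `x³ = aba·cdc` already absorb every generator on the right:
`c·c = c` and `cdc·d = dcd·d = dcd = cdc`; and once `a` has been read it absorbs `c` and `d`
on the right (`aca = ac`, `ada = ad`), whence `acdc·a = acdc`, and likewise
`bcb = bc`, `bdb = bd` give `bcdc·b = bcdc` after rewriting `aba` as `bab`.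
-/

open FreeMonoid

/-- The four vertices `a, b, c, d` of the digraph `Q'`. -/
inductive V4 : Type | a | b | c | d

open V4

/-- Defining relations of the Hecke–Kiselman monoid of `K`: edges `a—b`, `c—d`,
arrows `a→c`, `a→d`, `b→c`; `b` and `d` unconnected. -/
inductive QRel : FreeMonoid V4 → FreeMonoid V4 → Prop
  | idem (x : V4) : QRel (of x * of x) (of x)
  | braid_ab : QRel (of a * of b * of a) (of b * of a * of b)
  | braid_cd : QRel (of c * of d * of c) (of d * of c * of d)
  | ac₁ : QRel (of a * of c) (of a * of c * of a)
  | ac₂ : QRel (of a * of c) (of c * of a * of c)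
  | ad₁ : QRel (of a * of d) (of a * of d * of a)
  | ad₂ : QRel (of a * of d) (of d * of a * of d)
  | bc₁ : QRel (of b * of c) (of b * of c * of b)
  | bc₂ : QRel (of b * of c) (of c * of b * of c)
  | comm_bd : QRel (of b * of d) (of d * of b)

/-- The Hecke–Kiselman monoid `H_{Q'}`. -/
abbrev HKQ' : Type := (conGen QRel).Quotient

/-- Images of the generators in `H_{Q'}`. -/
def ga : HKQ' := Con.mk' _ (of a)
def gb : HKQ' := Con.mk' _ (of b)
def gc : HKQ' := Con.mk' _ (of c)
def gd : HKQ' := Con.mk' _ (of d)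

theorem mul_mul_mul_mul_self_of_mul_mul_self {S : Type*} [Semigroup S] {x y z : S}
    (hy : x * y * x = x * y) (hz : x * z * x = x * z) :
    x * y * z * y * x = x * y * z * y :=
  calc x * y * z * y * x
      = x * y * (x * z * x) * (y * x) := by simp only [hz, ← mul_assoc, hy]
    _ = x * y * x * z * (x * y * x) := by simp only [← mul_assoc]
    _ = x * y * (x * z * x) * y := by simp only [hy, ← mul_assoc]
    _ = x * y * z * y := by simp only [hz, ← mul_assoc, hy]

theorem Con.mk'_conGen_eq_of_rel {M : Type*} [MulOneClass M] {r : M → M → Prop} {u v : M}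
    (h : r u v) : Con.mk' (conGen r) u = Con.mk' (conGen r) v :=
  (Con.eq _).mpr (ConGen.Rel.of u v h)

theorem ga_mul_gb_mul_ga : ga * gb * ga = gb * ga * gb := Con.mk'_conGen_eq_of_rel .braid_ab
theorem gc_mul_gc : gc * gc = gc := Con.mk'_conGen_eq_of_rel (.idem c)
theorem gd_mul_gd : gd * gd = gd := Con.mk'_conGen_eq_of_rel (.idem d)
theorem gc_mul_gd_mul_gc : gc * gd * gc = gd * gc * gd := Con.mk'_conGen_eq_of_rel .braid_cd
theorem ga_mul_gc_mul_ga : ga * gc * ga = ga * gc := (Con.mk'_conGen_eq_of_rel .ac₁).symm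
theorem ga_mul_gd_mul_ga : ga * gd * ga = ga * gd := (Con.mk'_conGen_eq_of_rel .ad₁).symm
theorem gb_mul_gc_mul_gb : gb * gc * gb = gb * gc := (Con.mk'_conGen_eq_of_rel .bc₁).symm

theorem gb_mul_gd_mul_gb : gb * gd * gb = gb * gd := by
  have hbd : gb * gd = gd * gb := Con.mk'_conGen_eq_of_rel .comm_bd
  have hbb : gb * gb = gb := Con.mk'_conGen_eq_of_rel (.idem b)
  rw [hbd, mul_assoc, hbb]

theorem acdc_mul_ga : ga * gc * gd * gc * ga = ga * gc * gd * gc :=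
  mul_mul_mul_mul_self_of_mul_mul_self ga_mul_gc_mul_ga ga_mul_gd_mul_ga

theorem bcdc_mul_gb : gb * gc * gd * gc * gb = gb * gc * gd * gc :=
  mul_mul_mul_mul_self_of_mul_mul_self gb_mul_gc_mul_gb gb_mul_gd_mul_gb

theorem cdc_mul_gd : gc * gd * gc * gd = gc * gd * gc := by
  rw [gc_mul_gd_mul_gc, mul_assoc, gd_mul_gd]

/-- In `H_{Q'}`, the element `x³ = abacdc` (where `x = adbc`) is a right zero for the
generators. -/
theorem hkQ'_abacdc_right_zero :
    (ga * gb * ga * gc * gd * gc) * ga = ga * gb * ga * gc * gd * gc ∧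
    (ga * gb * ga * gc * gd * gc) * gb = ga * gb * ga * gc * gd * gc ∧
    (ga * gb * ga * gc * gd * gc) * gc = ga * gb * ga * gc * gd * gc ∧
    (ga * gb * ga * gc * gd * gc) * gd = ga * gb * ga * gc * gd * gc := by
  refine ⟨?_, ?_, ?_, ?_⟩
  · simpa only [mul_assoc] using congrArg (ga * gb * ·) acdc_mul_ga
  · rw [ga_mul_gb_mul_ga]
    simpa only [mul_assoc] using congrArg (gb * ga * ·) bcdc_mul_gb
  · rw [mul_assoc, gc_mul_gc]
  · simpa only [mul_assoc] using congrArg (ga * gb * ga * ·) cdc_mul_gd
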